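/- arXiv:1503.05243 — 5 statements merged into one kernel-verified Lean document; each statement's English description precedes it below -/
import Mathlib

section
/- Let J be an interval of the form [0,R], [0,R) or [0,∞) in the nonnegative reals, let n be a natural number, and let φ : J → ℝ₊ be quasi-homogeneous of degree r > 0 on J. Then the function Φ defined by Φ(t) = (1 + φ(t))^n − 1 is also quasi-homogeneous of degree r on J. -/
open Set

lemma aux_pow_convex (m : ℕ) : ∀ x : ℝ, 0 ≤ x → ∀ l : ℝ, 0 ≤ l → l ≤ 1 →
    (1 + l * x) ^ m - 1 ≤ l * ((1 + x) ^ m - 1) := by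
  induction m with
  | zero => intro x hx l hl0 hl1; simp
  | succ m ih =>
    intro x hx l hl0 hl1
    have h1 := ih x hx l hl0 hl1
    have h2 : (1:ℝ) ≤ (1 + x) ^ m := one_le_pow₀ (by linarith)
    have h3 : (1:ℝ) ≤ (1 + l * x) ^ m :=
      one_le_pow₀ (by nlinarith)
    have h4 : (0:ℝ) ≤ (1 + x) ^ m := by linarith
    rw [pow_succ, pow_succ]
    nlinarith [mul_nonneg hl0 hx, mul_nonneg (mul_nonneg hl0 hx) (sub_nonneg.mpr h2)]

/-- If `φ` is quasi-homogeneous of degree `r > 0` on an interval `J`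
(of the form `[0,R]`, `[0,R)` or `[0,∞)`), then `Φ(t) = (1 + φ(t))^m − 1` is also
quasi-homogeneous of degree `r` on `J`. -/
theorem quasiHomogeneous_one_add_pow_sub_one
    (J : Set ℝ)
    (hJ : (∃ R > (0:ℝ), J = Set.Icc 0 R) ∨ (∃ R > (0:ℝ), J = Set.Ico 0 R) ∨ J = Set.Ici 0)
    (m : ℕ) (φ : ℝ → ℝ) (r : ℝ) (hr : 0 < r)
    (hφ0 : ∀ t ∈ J, 0 ≤ φ t)
    (hφ : ∀ l ∈ Set.Icc (0:ℝ) 1, ∀ t ∈ J, φ (l * t) ≤ l ^ r * φ t) :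
    ∀ l ∈ Set.Icc (0:ℝ) 1, ∀ t ∈ J,
      (1 + φ (l * t)) ^ m - 1 ≤ l ^ r * ((1 + φ t) ^ m - 1) := by
  intro l hl t ht
  obtain ⟨hl0, hl1⟩ := hl
  -- l * t ∈ J
  have ht0 : 0 ≤ t := by
    rcases hJ with ⟨R, hR, rfl⟩ | ⟨R, hR, rfl⟩ | rfl
    · exact ht.1
    · exact ht.1
    · exact ht
  have hltJ : l * t ∈ J := by
    have h0 : 0 ≤ l * t := mul_nonneg hl0 ht0
    have hle : l * t ≤ t := by nlinarith
    rcases hJ with ⟨R, hR, rfl⟩ | ⟨R, hR, rfl⟩ | rfl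
    · exact ⟨h0, hle.trans ht.2⟩
    · exact ⟨h0, lt_of_le_of_lt hle ht.2⟩
    · exact h0
  have hlr0 : 0 ≤ l ^ r := Real.rpow_nonneg hl0 r
  have hlr1 : l ^ r ≤ 1 := Real.rpow_le_one hl0 hl1 hr.le
  have hφt := hφ0 t ht
  have hφlt := hφ0 _ hltJ
  have hkey := hφ l ⟨hl0, hl1⟩ t ht
  have step1 : (1 + φ (l * t)) ^ m ≤ (1 + l ^ r * φ t) ^ m :=
    pow_le_pow_left₀ (by linarith) (by linarith) m
  have step2 := aux_pow_convex m (φ t) hφt (l ^ r) hlr0 hlr1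
  linarith
end

section
/- Let X be a set, D ⊆ X, T : D → X a map, and E : D → ℝ₊ a function of initial conditions of T with gauge function φ of order r ≥ 1 on an interval J ⊆ ℝ₊ containing 0, where φ(t) = t·φ̂(t) for a nondecreasing function φ̂ : J → [0,1]. Suppose x ∈ D is an initial point of T, i.e. E(x) ∈ J and Tⁿx ∈ D for all n ≥ 0, and set xₙ = Tⁿx and λ = φ̂(E(x₀)). Then every iterate xₙ is an initial point of T, and for all n ≥ 0 one has E(x_{n+1}) ≤ λ^{rⁿ} · E(xₙ) and E(xₙ) ≤ E(x₀) · λ^{Sₙ(r)}, where Sₙ(r) = Σ_{k=0}^{n−1} r^k (with S₀(r) = 0, and with the convention 0⁰ = 1). -/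
open Set Finset

/-- If `E` is a function of initial conditions of `T : D ⊆ X → X` with
gauge function `φ(t) = t·φ̂(t)` of order `r ≥ 1` on `J` (`φ̂ : J → [0,1]` nondecreasing),
and `x` is an initial point of `T`, then every iterate `xₙ = Tⁿ x` is an initial point,
`E(x_{n+1}) ≤ λ^{rⁿ} E(xₙ)` and `E(xₙ) ≤ E(x₀) λ^{Sₙ(r)}` where `λ = φ̂(E(x₀))` and
`Sₙ(r) = Σ_{k<n} r^k`. -/
theorem initial_point_iterates_estimates
    {X : Type*} (D : Set X) (T : X → X) (E : X → ℝ)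
    (J : Set ℝ)
    (hJ : (∃ R > (0:ℝ), J = Set.Icc 0 R) ∨ (∃ R > (0:ℝ), J = Set.Ico 0 R) ∨ J = Set.Ici 0)
    (φ φhat : ℝ → ℝ) (r : ℝ) (hr : 1 ≤ r)
    (hE0 : ∀ x ∈ D, 0 ≤ E x)
    (hφJ : ∀ t ∈ J, φ t ∈ J)
    (hquasi : ∀ l ∈ Set.Icc (0:ℝ) 1, ∀ t ∈ J, φ (l * t) ≤ l ^ r * φ t)
    (hgauge : ∀ t ∈ J, φ t ≤ t)
    (hφhat_mono : ∀ s ∈ J, ∀ t ∈ J, s ≤ t → φhat s ≤ φhat t)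
    (hφhat_range : ∀ t ∈ J, φhat t ∈ Set.Icc (0:ℝ) 1)
    (hφeq : ∀ t ∈ J, φ t = t * φhat t)
    (hE : ∀ x ∈ D, T x ∈ D → E x ∈ J → E (T x) ≤ φ (E x))
    (x : X) (hxJ : E x ∈ J) (hxD : ∀ n : ℕ, T^[n] x ∈ D) :
    (∀ n : ℕ, E (T^[n] x) ∈ J ∧ ∀ m : ℕ, T^[m] (T^[n] x) ∈ D) ∧
    (∀ n : ℕ, E (T^[n+1] x) ≤ (φhat (E x)) ^ (r ^ n) * E (T^[n] x)) ∧
    (∀ n : ℕ, E (T^[n] x) ≤ E x * (φhat (E x)) ^ (∑ k ∈ Finset.range n, r ^ k)) := by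

  have hlam01 := hφhat_range _ hxJ
  obtain ⟨hlam0, hlam1⟩ := hlam01
  have hJnonneg : ∀ t ∈ J, (0:ℝ) ≤ t := by
    rcases hJ with ⟨R, hR, rfl⟩ | ⟨R, hR, rfl⟩ | rfl
    · exact fun t ht => ht.1
    · exact fun t ht => ht.1
    · exact fun t ht => ht
  have hJdc : ∀ s t : ℝ, 0 ≤ s → s ≤ t → t ∈ J → s ∈ J := by
    rcases hJ with ⟨R, hR, rfl⟩ | ⟨R, hR, rfl⟩ | rfl
    · exact fun s t hs hst ht => ⟨hs, hst.trans ht.2⟩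
    · exact fun s t hs hst ht => ⟨hs, lt_of_le_of_lt hst ht.2⟩
    · exact fun s t hs _ _ => hs
  have ht0nn : (0:ℝ) ≤ E x := hJnonneg _ hxJ
  have hr0 : (0:ℝ) ≤ r := le_trans zero_le_one hr
  have hSnn : ∀ n : ℕ, (0:ℝ) ≤ ∑ k ∈ Finset.range n, r ^ k := fun n =>
    Finset.sum_nonneg fun k _ => pow_nonneg hr0 k
  have h0J : (0:ℝ) ∈ J := hJdc 0 (E x) le_rfl ht0nn hxJ
  -- the key single-step estimate
  have hBstep : ∀ n : ℕ, E (T^[n] x) ∈ J →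
      E (T^[n] x) ≤ E x * (φhat (E x)) ^ (∑ k ∈ Finset.range n, r ^ k) →
      E (T^[n+1] x) ≤ (φhat (E x)) ^ (r ^ n) * E (T^[n] x) := by
    intro n hsJ hC
    set s := E (T^[n] x) with hs_def
    set lam := φhat (E x) with hlam_def
    set Sn := ∑ k ∈ Finset.range n, r ^ k with hSn_def
    have hs0 : (0:ℝ) ≤ s := hJnonneg _ hsJ
    set l := lam ^ Sn with hl_def
    have hl0 : (0:ℝ) ≤ l := Real.rpow_nonneg hlam0 _
    have hl1 : l ≤ 1 := Real.rpow_le_one hlam0 hlam1 (hSnn n)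
    have hltJ : l * E x ∈ J :=
      hJdc _ _ (mul_nonneg hl0 ht0nn) (mul_le_of_le_one_left ht0nn hl1) hxJ
    have hsle : s ≤ l * E x := by rw [mul_comm]; exact hC
    have hT1D : T (T^[n] x) ∈ D := by
      simpa [Function.iterate_succ_apply'] using hxD (n+1)
    have hle1 : E (T^[n+1] x) ≤ φ s := by
      rw [Function.iterate_succ_apply']
      exact hE _ (hxD n) hT1D hsJ
    rcases eq_or_lt_of_le hs0 with h | h
    · calc E (T^[n+1] x) ≤ φ s := hle1
        _ = φ 0 := by rw [← h]
        _ ≤ 0 := hgauge 0 h0J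
        _ = lam ^ (r ^ n) * s := by rw [← h]; ring
    · have hlt0 : 0 < l * E x := lt_of_lt_of_le h hsle
      have hlpos : 0 < l := by
        by_contra h'
        push_neg at h'
        nlinarith
      have hq := hquasi l ⟨hl0, hl1⟩ (E x) hxJ
      rw [hφeq _ hltJ, hφeq _ hxJ] at hq
      have hkey : φhat (l * E x) ≤ l ^ (r - 1) * lam := by
        have hlr : l ^ r = l ^ (r - 1) * l := by
          rw [← Real.rpow_add_one (ne_of_gt hlpos) (r - 1)]
          ring_nf
        rw [hlr] at hq
        nlinarith [hlt0, hq]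
      have hmono := hφhat_mono s hsJ (l * E x) hltJ hsle
      have hexp : l ^ (r - 1) * lam = lam ^ (r ^ n) := by
        have h1 : (lam ^ Sn) ^ (r - 1) = lam ^ (Sn * (r - 1)) :=
          (Real.rpow_mul hlam0 _ _).symm
        have h2 : lam ^ (Sn * (r - 1)) * lam = lam ^ (Sn * (r - 1) + 1) := by
          rw [Real.rpow_add_of_nonneg hlam0 (mul_nonneg (hSnn n) (by linarith)) zero_le_one,
            Real.rpow_one]
        have h3 : Sn * (r - 1) + 1 = r ^ n := by
          have hg := geom_sum_mul r n
          rw [hSn_def]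
          linarith
        rw [hl_def, h1, h2, h3]
      calc E (T^[n+1] x) ≤ φ s := hle1
        _ = s * φhat s := hφeq _ hsJ
        _ ≤ s * φhat (l * E x) := mul_le_mul_of_nonneg_left hmono hs0
        _ ≤ s * (l ^ (r - 1) * lam) := mul_le_mul_of_nonneg_left hkey hs0
        _ = lam ^ (r ^ n) * s := by rw [hexp]; ring
  -- main induction
  have hAC : ∀ n : ℕ, (E (T^[n] x) ∈ J) ∧
      (E (T^[n] x) ≤ E x * (φhat (E x)) ^ (∑ k ∈ Finset.range n, r ^ k)) := by
    intro n
    induction n with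
    | zero => exact ⟨hxJ, by simp⟩
    | succ n ih =>
      obtain ⟨hsJ, hC⟩ := ih
      have hB := hBstep n hsJ hC
      have hT1D : T (T^[n] x) ∈ D := by
        simpa [Function.iterate_succ_apply'] using hxD (n+1)
      have hAn1 : E (T^[n+1] x) ∈ J := by
        have hle1 : E (T^[n+1] x) ≤ φ (E (T^[n] x)) := by
          rw [Function.iterate_succ_apply']
          exact hE _ (hxD n) hT1D hsJ
        exact hJdc _ _ (hE0 _ (hxD (n+1))) (hle1.trans (hgauge _ hsJ)) hsJ
      have hrp : (0:ℝ) ≤ (φhat (E x)) ^ (r ^ n) := Real.rpow_nonneg hlam0 _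
      refine ⟨hAn1, ?_⟩
      calc E (T^[n+1] x) ≤ (φhat (E x)) ^ (r ^ n) * E (T^[n] x) := hB
        _ ≤ (φhat (E x)) ^ (r ^ n) * (E x * (φhat (E x)) ^ (∑ k ∈ Finset.range n, r ^ k)) :=
            mul_le_mul_of_nonneg_left hC hrp
        _ = E x * ((φhat (E x)) ^ (∑ k ∈ Finset.range n, r ^ k) * (φhat (E x)) ^ (r ^ n)) := by
            ring
        _ = E x * (φhat (E x)) ^ ((∑ k ∈ Finset.range n, r ^ k) + r ^ n) := by
            rw [Real.rpow_add_of_nonneg hlam0 (hSnn n) (pow_nonneg hr0 n)]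
        _ = E x * (φhat (E x)) ^ (∑ k ∈ Finset.range (n+1), r ^ k) := by
            rw [Finset.sum_range_succ]
  refine ⟨fun n => ⟨(hAC n).1, fun m => ?_⟩, fun n => hBstep n (hAC n).1 (hAC n).2,
    fun n => (hAC n).2⟩
  rw [← Function.iterate_add_apply]
  exact hxD (m + n)
end

section
/- Let (K,|·|) be a normed field, n ≥ 2, u, v ∈ Kⁿ with 1 ≤ p ≤ ∞, and suppose v has pairwise distinct components. Then for every index i, d_i(u) ≥ (1 − 2^{1/q} · ‖(u − v)/d(v)‖_p) · d_i(v), where q is the conjugate exponent of p. -/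
open Finset Filter Topology
open scoped ENNReal

noncomputable def pnorm {n : ℕ} (p : ℝ≥0∞) (v : Fin n → ℝ) : ℝ :=
  if p = ⊤ then ⨆ i, |v i| else (∑ i, |v i| ^ p.toReal) ^ (1 / p.toReal)

noncomputable def epow (a : ℝ) (p : ℝ≥0∞) : ℝ :=
  if p = ⊤ then 1 else a ^ (1 / p.toReal)

noncomputable def dsep {K : Type*} [NormedField K] {n : ℕ} (x : Fin n → K) (i : Fin n) : ℝ :=
  sInf {r : ℝ | ∃ j, j ≠ i ∧ r = ‖x i - x j‖}

noncomputable def Wcorr {K : Type*} [NormedField K] {n : ℕ} (f : Polynomial K)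
    (x : Fin n → K) (i : Fin n) : K :=
  Polynomial.eval (x i) f / (f.leadingCoeff * ∏ j ∈ Finset.univ.erase i, (x i - x j))

def IsRootVector {K : Type*} [NormedField K] {n : ℕ} (f : Polynomial K) (ξ : Fin n → K) : Prop :=
  ∀ z : K, Polynomial.eval z f = f.leadingCoeff * ∏ i, (z - ξ i)

/-!
For `j ≠ i` both `d_i(v)` and `d_j(v)` are at most `‖v_i - v_j‖`, so with
`a_k = ‖u_k - v_k‖ / d_k(v)` we get `‖u_k - v_k‖ ≤ a_k ‖v_i - v_j‖` for `k = i, j`, and the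
triangle inequality gives `‖u_i - u_j‖ ≥ (1 - a_i - a_j) ‖v_i - v_j‖ ≥ (1 - a_i - a_j) d_i(v)`.
The power-mean inequality on the two coordinates `i, j` bounds `a_i + a_j ≤ 2^{1/q} ‖a‖_p`.
-/

lemma epow_eq_rpow_toReal_inv (a : ℝ) (q : ℝ≥0∞) : epow a q = a ^ q⁻¹.toReal := by
  by_cases hq : q = ⊤
  · simp [epow, hq]
  · simp [epow, hq, ENNReal.toReal_inv]

lemma toReal_inv_eq_one_sub_of_inv_add_inv_eq_one {p q : ℝ≥0∞} (hp : 1 ≤ p)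
    (hpq : 1 / p + 1 / q = 1) : q⁻¹.toReal = 1 - 1 / p.toReal := by
  have hp' : p⁻¹ ≤ 1 := ENNReal.inv_le_one.2 hp
  have hq : q⁻¹ = 1 - p⁻¹ := by
    simp only [one_div] at hpq
    rw [← hpq, ENNReal.add_sub_cancel_left (ne_top_of_le_ne_top ENNReal.one_ne_top hp')]
  rw [hq, ENNReal.toReal_sub_of_le hp' ENNReal.one_ne_top, ENNReal.toReal_inv, one_div]
  simp

lemma epow_eq_rpow_one_sub {p q : ℝ≥0∞} (hp : 1 ≤ p) (hpq : 1 / p + 1 / q = 1) (a : ℝ) :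
    epow a q = a ^ (1 - 1 / p.toReal) := by
  rw [epow_eq_rpow_toReal_inv, toReal_inv_eq_one_sub_of_inv_add_inv_eq_one hp hpq]

/-- For `p = ⊤` the exponent is `1`, since `(⊤ : ℝ≥0∞).toReal = 0` and `1 / 0 = 0`. -/
lemma sum_abs_le_card_rpow_mul_pnorm {n : ℕ} {p : ℝ≥0∞} (hp : 1 ≤ p) (s : Finset (Fin n))
    (f : Fin n → ℝ) : ∑ k ∈ s, |f k| ≤ (#s : ℝ) ^ (1 - 1 / p.toReal) * pnorm p f := by
  by_cases hpt : p = ⊤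
  · have hle : ∀ k, |f k| ≤ ⨆ i, |f i| := le_ciSup (Set.finite_range _).bddAbove
    simpa [pnorm, hpt] using Finset.sum_le_card_nsmul s _ _ fun k _ => hle k
  set r := p.toReal
  have hr : 1 ≤ r := by simpa using ENNReal.toReal_mono hpt hp
  have hS : 0 ≤ ∑ k, |f k| ^ r := by positivity
  rw [pnorm, if_neg hpt, show 1 - 1 / r = (r - 1) * r⁻¹ by field_simp,
    Real.rpow_mul (by positivity), one_div, ← Real.mul_rpow (by positivity) hS,
    Real.le_rpow_inv_iff_of_pos (by positivity) (by positivity) (by linarith)]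
  calc (∑ k ∈ s, |f k|) ^ r ≤ (#s : ℝ) ^ (r - 1) * ∑ k ∈ s, |f k| ^ r :=
        Real.rpow_sum_le_const_mul_sum_rpow s f hr
    _ ≤ (#s : ℝ) ^ (r - 1) * ∑ k, |f k| ^ r := by
        gcongr
        exact s.subset_univ

lemma one_sub_add_mul_norm_sub_le {E : Type*} [SeminormedAddCommGroup E] {x y x' y' : E}
    {α β : ℝ} (hx : ‖x' - x‖ ≤ α * ‖x - y‖) (hy : ‖y' - y‖ ≤ β * ‖x - y‖) :
    (1 - (α + β)) * ‖x - y‖ ≤ ‖x' - y'‖ := by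
  have : ‖x - y‖ ≤ ‖x' - y'‖ + ‖x' - x‖ + ‖y' - y‖ := by
    calc ‖x - y‖ = ‖(x' - y') - (x' - x) + (y' - y)‖ := by congr 1; abel
      _ ≤ _ := (norm_add_le _ _).trans (by gcongr; exact norm_sub_le _ _)
  linarith

section dsep

variable {K : Type*} [NormedField K] {n : ℕ}

lemma dsep_le (x : Fin n → K) {i j : Fin n} (hji : j ≠ i) : dsep x i ≤ ‖x i - x j‖ :=
  csInf_le ⟨0, by rintro _ ⟨j, -, rfl⟩; exact norm_nonneg _⟩ ⟨j, hji, rfl⟩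

lemma dsep_nonneg (x : Fin n → K) (i : Fin n) : 0 ≤ dsep x i :=
  Real.sInf_nonneg (by rintro _ ⟨j, -, rfl⟩; exact norm_nonneg _)

lemma exists_dsep_eq (x : Fin n → K) {i j : Fin n} (hji : j ≠ i) :
    ∃ k, k ≠ i ∧ dsep x i = ‖x i - x k‖ := by
  set S := {r : ℝ | ∃ k, k ≠ i ∧ r = ‖x i - x k‖}
  have hne : S.Nonempty := ⟨_, j, hji, rfl⟩
  have hfin : S.Finite :=
    (Set.finite_range fun k => ‖x i - x k‖).subset (by rintro _ ⟨k, -, rfl⟩; exact ⟨k, rfl⟩)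
  exact hne.csInf_mem hfin

lemma dsep_pos {x : Fin n → K} (hx : Function.Injective x) {i j : Fin n} (hji : j ≠ i) :
    0 < dsep x i := by
  obtain ⟨k, hki, hk⟩ := exists_dsep_eq x hji
  rw [hk, norm_pos_iff, sub_ne_zero]
  exact hx.ne hki.symm

lemma mul_dsep_le_dsep {x y : Fin n → K} {i : Fin n} {c : ℝ} (hc : 0 ≤ c)
    (h : ∀ j, j ≠ i → c * ‖y i - y j‖ ≤ ‖x i - x j‖) : c * dsep y i ≤ dsep x i := by
  by_cases hi : ∃ j, j ≠ i
  · obtain ⟨j, hji⟩ := hi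
    refine le_csInf ⟨_, j, hji, rfl⟩ ?_
    rintro _ ⟨k, hki, rfl⟩
    exact (mul_le_mul_of_nonneg_left (dsep_le y hki) hc).trans (h k hki)
  · -- with no `j ≠ i` both separations are `sInf ∅ = 0`
    push Not at hi
    simp [dsep, hi]

lemma norm_sub_le_div_dsep_mul {u v : Fin n → K} (hv : Function.Injective v) {i j : Fin n}
    (hji : j ≠ i) : ‖u i - v i‖ ≤ ‖u i - v i‖ / dsep v i * ‖v i - v j‖ := by
  have hd := dsep_pos hv hji
  calc ‖u i - v i‖ = ‖u i - v i‖ / dsep v i * dsep v i := (div_mul_cancel₀ _ hd.ne').symm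
    _ ≤ ‖u i - v i‖ / dsep v i * ‖v i - v j‖ := by gcongr; exact dsep_le v hji

end dsep

theorem dsep_lower_bound_general {K : Type*} [NormedField K] {n : ℕ}
    (u v : Fin n → K) (hv : Function.Injective v)
    (p q : ℝ≥0∞) (hp : 1 ≤ p) (hpq : 1 / p + 1 / q = 1) :
    ∀ i : Fin n,
      (1 - epow 2 q * pnorm p (fun j => ‖u j - v j‖ / dsep v j)) * dsep v i ≤ dsep u i := by
  intro i
  set a : Fin n → ℝ := fun j => ‖u j - v j‖ / dsep v j
  set E := epow 2 q * pnorm p a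
  rcases le_or_gt (1 - E) 0 with hE | hE
  · exact (mul_nonpos_of_nonpos_of_nonneg hE (dsep_nonneg v i)).trans (dsep_nonneg u i)
  refine mul_dsep_le_dsep hE.le fun j hji => ?_
  have ha : ∀ k, 0 ≤ a k := fun k => div_nonneg (norm_nonneg _) (dsep_nonneg v k)
  have hpair : a i + a j ≤ E := by
    have := sum_abs_le_card_rpow_mul_pnorm hp {i, j} a
    rwa [sum_pair hji.symm, card_pair hji.symm, abs_of_nonneg (ha i),
      abs_of_nonneg (ha j), ← epow_eq_rpow_one_sub hp hpq] at this
  have hvj : ‖u j - v j‖ ≤ a j * ‖v i - v j‖ := by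
    rw [norm_sub_rev (v i)]; exact norm_sub_le_div_dsep_mul hv hji.symm
  calc (1 - E) * ‖v i - v j‖ ≤ (1 - (a i + a j)) * ‖v i - v j‖ := by gcongr
    _ ≤ ‖u i - u j‖ :=
      one_sub_add_mul_norm_sub_le (norm_sub_le_div_dsep_mul hv hji) hvj

/-- If `v ∈ Kⁿ` has pairwise distinct components, then for every `i`,
`d_i(u) ≥ (1 − 2^{1/q}·‖(u−v)/d(v)‖_p)·d_i(v)`. -/
theorem dsep_lower_bound {K : Type*} [NormedField K] {n : ℕ} (hn : 2 ≤ n)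
    (u v : Fin n → K) (hv : Function.Injective v)
    (p q : ℝ≥0∞) (hp : 1 ≤ p) (hpq : 1 / p + 1 / q = 1) :
    ∀ i : Fin n,
      (1 - epow 2 q * pnorm p (fun j => ‖u j - v j‖ / dsep v j)) * dsep v i ≤ dsep u i :=
  dsep_lower_bound_general u v hv p q hp hpq
end

section
/- Let (K,|·|) be a normed field, u ∈ Kⁿ with n ≥ 1, and 1 ≤ p ≤ ∞. Then |∏_{i=1}^n (1 + u_i)| ≤ (1 + ‖u‖_p / n^{1/p})^n and |∏_{i=1}^n (1 + u_i) − 1| ≤ (1 + ‖u‖_p / n^{1/p})^n − 1 (with n^{1/∞} = 1 when p = ∞). -/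
open Finset Filter Topology
open scoped ENNReal

/-!
Every monomial of `∏ (1 + uᵢ) - 1` is dominated in norm by the corresponding monomial of
`∏ (1 + ‖uᵢ‖) - 1`. By AM–GM, `∏ (1 + ‖uᵢ‖) ≤ (1 + m)ⁿ` where `m` is the arithmetic mean of the
`‖uᵢ‖`, and by the power-mean inequality `m ≤ ‖u‖_p / n^{1/p}`. The bound on `‖∏ (1 + uᵢ)‖`
then follows from `‖x‖ ≤ 1 + ‖x - 1‖`.
-/

lemma Finset.norm_prod_one_add_sub_one_le_prod_norm {ι R : Type*} [NormedCommRing R]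
    [NormOneClass R] (s : Finset ι) (f : ι → R) :
    ‖∏ i ∈ s, (1 + f i) - 1‖ ≤ ∏ i ∈ s, (1 + ‖f i‖) - 1 := by
  classical
  induction s using Finset.induction_on with
  | empty => simp
  | insert x s hx ih =>
    set P := ∏ i ∈ s, (1 + f i)
    set Q := ∏ i ∈ s, (1 + ‖f i‖)
    have hP : ‖P‖ ≤ Q := by
      have := norm_le_norm_sub_add P 1
      rw [norm_one] at this
      linarith
    rw [prod_insert hx, prod_insert hx,
      show (1 + f x) * P - 1 = (P - 1) + f x * P by ring]
    calc ‖(P - 1) + f x * P‖ ≤ ‖P - 1‖ + ‖f x‖ * ‖P‖ := norm_add_le_of_le le_rfl (norm_mul_le _ _)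
      _ ≤ (Q - 1) + ‖f x‖ * Q := by gcongr
      _ = (1 + ‖f x‖) * Q - 1 := by ring

section Means

variable {ι : Type*} {v : ι → ℝ}

lemma Real.prod_one_add_le_one_add_sum_div_card_pow (s : Finset ι) (hv : ∀ i ∈ s, 0 ≤ v i) :
    ∏ i ∈ s, (1 + v i) ≤ (1 + (∑ i ∈ s, v i) / #s) ^ #s := by
  rcases s.eq_empty_or_nonempty with rfl | hs
  · simp
  have hn : (0 : ℝ) < #s := by simpa using hs.card_pos
  have hz : ∀ i ∈ s, 0 ≤ 1 + v i := fun i hi => by linarith [hv i hi]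
  have amgm : ∏ i ∈ s, (1 + v i) ^ (1 / (#s : ℝ)) ≤ 1 + (∑ i ∈ s, v i) / #s := by
    convert Real.geom_mean_le_arith_mean_weighted s (fun _ => 1 / (#s : ℝ)) (fun i => 1 + v i)
      (fun _ _ => by positivity) (by simp [hn.ne']) hz using 1
    rw [← mul_sum, sum_add_distrib, sum_const, nsmul_one]
    field_simp
  calc ∏ i ∈ s, (1 + v i) = (∏ i ∈ s, (1 + v i) ^ (1 / (#s : ℝ))) ^ #s := by
        rw [← prod_pow]
        refine prod_congr rfl fun i hi => ?_
        rw [← Real.rpow_natCast, ← Real.rpow_mul (hz i hi), one_div_mul_cancel hn.ne',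
          Real.rpow_one]
    _ ≤ (1 + (∑ i ∈ s, v i) / #s) ^ #s := by
        gcongr
        exact prod_nonneg fun i hi => Real.rpow_nonneg (hz i hi) _

lemma Real.sum_div_card_le_rpow_sum_rpow_div (s : Finset ι) (hv : ∀ i ∈ s, 0 ≤ v i) {p : ℝ}
    (hp : 1 ≤ p) :
    (∑ i ∈ s, v i) / #s ≤ (∑ i ∈ s, v i ^ p) ^ (1 / p) / (#s : ℝ) ^ (1 / p) := by
  rcases s.eq_empty_or_nonempty with rfl | hs
  · rw [sum_empty, sum_empty, card_empty, Nat.cast_zero, zero_div]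
    positivity
  have hn : (0 : ℝ) < #s := by simpa using hs.card_pos
  have := Real.arith_mean_le_rpow_mean s (fun _ => 1 / (#s : ℝ)) v (fun _ _ => by positivity)
    (by simp [hn.ne']) hv hp
  rw [← mul_sum, ← mul_sum, Real.mul_rpow (by positivity)
    (sum_nonneg fun i hi => Real.rpow_nonneg (hv i hi) p), Real.div_rpow zero_le_one hn.le,
    Real.one_rpow] at this
  simpa [div_eq_inv_mul] using this

lemma Real.sum_div_card_le_iSup_abs [Fintype ι] :
    (∑ i, v i) / Fintype.card ι ≤ ⨆ i, |v i| :=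
  div_le_of_le_mul₀ (Nat.cast_nonneg _) (Real.iSup_nonneg fun _ => abs_nonneg _) <| by
    calc ∑ i, v i ≤ ∑ _i : ι, ⨆ j, |v j| :=
          sum_le_sum fun i _ => (le_abs_self _).trans
            (le_ciSup (f := fun j => |v j|) (Finite.bddAbove_range _) i)
      _ = (⨆ j, |v j|) * Fintype.card ι := by simp [mul_comm]

end Means

lemma sum_div_card_le_pnorm_div_epow {n : ℕ} {v : Fin n → ℝ} (hv : ∀ i, 0 ≤ v i) {p : ℝ≥0∞}
    (hp : 1 ≤ p) : (∑ i, v i) / n ≤ pnorm p v / epow n p := by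
  by_cases hp_top : p = ⊤
  · simpa [pnorm, epow, hp_top] using Real.sum_div_card_le_iSup_abs (v := v)
  · have hp_real : 1 ≤ p.toReal := by simpa using ENNReal.toReal_mono hp_top hp
    have hv_abs : ∀ i, |v i| = v i := fun i => abs_of_nonneg (hv i)
    simpa [pnorm, epow, hp_top, hv_abs] using
      Real.sum_div_card_le_rpow_sum_rpow_div univ (fun i _ => hv i) hp_real

theorem prod_one_add_bound_general {K : Type*} [NormedField K] {n : ℕ}
    (u : Fin n → K) (p : ℝ≥0∞) (hp : 1 ≤ p) :
    ‖∏ i, (1 + u i)‖ ≤ (1 + pnorm p (fun i => ‖u i‖) / epow (n : ℝ) p) ^ n ∧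
    ‖(∏ i, (1 + u i)) - 1‖ ≤ (1 + pnorm p (fun i => ‖u i‖) / epow (n : ℝ) p) ^ n - 1 := by
  have hv : ∀ i, 0 ≤ ‖u i‖ := fun i => norm_nonneg _
  have hmean := sum_div_card_le_pnorm_div_epow hv hp
  have hprod : ∏ i, (1 + ‖u i‖) ≤ (1 + pnorm p (fun i => ‖u i‖) / epow (n : ℝ) p) ^ n := by
    refine (Real.prod_one_add_le_one_add_sum_div_card_pow univ fun i _ => hv i).trans ?_
    rw [card_univ, Fintype.card_fin]
    gcongr
  have hsub := (univ.norm_prod_one_add_sub_one_le_prod_norm u).trans (sub_le_sub_right hprod 1)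
  refine ⟨?_, hsub⟩
  have := norm_le_norm_sub_add (∏ i, (1 + u i)) 1
  rw [norm_one] at this
  linarith

/-- For `u ∈ Kⁿ` (`n ≥ 1`) and `1 ≤ p ≤ ∞`:
`|∏ (1 + uᵢ)| ≤ (1 + ‖u‖_p / n^{1/p})^n` and
`|∏ (1 + uᵢ) − 1| ≤ (1 + ‖u‖_p / n^{1/p})^n − 1`. -/
theorem prod_one_add_bound {K : Type*} [NormedField K] {n : ℕ} (hn : 1 ≤ n)
    (u : Fin n → K) (p : ℝ≥0∞) (hp : 1 ≤ p) :
    ‖∏ i, (1 + u i)‖ ≤ (1 + pnorm p (fun i => ‖u i‖) / epow (n : ℝ) p) ^ n ∧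
    ‖(∏ i, (1 + u i)) - 1‖ ≤ (1 + pnorm p (fun i => ‖u i‖) / epow (n : ℝ) p) ^ n - 1 :=
  prod_one_add_bound_general u p hp
end

section
/- Let (K,|·|) be a normed field, f ∈ K[z] a polynomial of degree n ≥ 2 having n simple zeros in K, ξ ∈ Kⁿ a root-vector of f, 1 ≤ p ≤ ∞ with conjugate exponent q, and 0 < h < 1. Let sep(f) = min_{i≠j} |ξ_i − ξ_j|. Suppose the initial guess x⁰ ∈ Kⁿ satisfies ‖x⁰ − ξ‖_p ≤ ρ, where ρ = R(n,p,h) · sep(f) and R(n,p,h) = ((1+h)^{1/(n−1)} − 1)/(2^{1/q}((1+h)^{1/(n−1)} − 1) + (n−1)^{−1/p}). Then the Weierstrass iteration x^{k+1} = x^k − W(x^k) is well defined, converges to ξ, and for all k ≥ 0: |x^{k+1}_i − ξ_i| ≤ h^{2^k} |x^k_i − ξ_i| and |x^k_i − ξ_i| ≤ h^{2^k − 1} |x⁰_i − ξ_i| for each i, and ‖x^k − ξ‖_p ≤ ρ · h^{2^k − 1}. -/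
open Finset Filter Topology
open scoped ENNReal

/-!
With `e = y - ξ`, the Weierstrass correction satisfies
`y i - W i (y) - ξ i = -e i * (∏ j ≠ i, (1 + e j / (y i - y j)) - 1)`.
If `‖e‖_p ≤ ρ θ` with `θ ≤ 1`, Hölder's inequality gives `‖y i - y j‖ ≥ sep - 2^{1/q} ρ θ` and
`∑ j ≠ i, ‖e j‖ ≤ (n-1)^{1/q} ρ θ`; AM-GM and the convexity of `t ↦ t ^ (n-1)` then bound the
product term by `h θ`, and `ρ = R(n,p,h) sep` is exactly the radius for which this works. So a step
multiplies every coordinate error by `h θ`, and with `θ_k = h ^ (2 ^ k - 1)` the errors stay in the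
ball and shrink quadratically.
-/

section PNorm

variable {n : ℕ} {p q : ℝ≥0∞}

lemma pnorm_top (v : Fin n → ℝ) : pnorm ⊤ v = ⨆ i, |v i| := if_pos rfl

lemma pnorm_of_ne_top (hp : p ≠ ⊤) (v : Fin n → ℝ) :
    pnorm p v = (∑ i, |v i| ^ p.toReal) ^ (1 / p.toReal) := if_neg hp

lemma epow_top (a : ℝ) : epow a ⊤ = 1 := if_pos rfl

lemma epow_of_ne_top (hp : p ≠ ⊤) (a : ℝ) : epow a p = a ^ (1 / p.toReal) := if_neg hp

lemma epow_nonneg {a : ℝ} (ha : 0 ≤ a) (p : ℝ≥0∞) : 0 ≤ epow a p := by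
  unfold epow; split
  · exact zero_le_one
  · exact Real.rpow_nonneg ha _

lemma epow_pos {a : ℝ} (ha : 0 < a) (p : ℝ≥0∞) : 0 < epow a p := by
  unfold epow; split
  · exact one_pos
  · exact Real.rpow_pos_of_pos ha _

lemma epow_mul_epow [p.HolderConjugate q] {a : ℝ} (ha : 0 ≤ a) : epow a q * epow a p = a := by
  by_cases hp : p = ⊤
  · subst hp
    obtain rfl : q = 1 := (ENNReal.HolderConjugate.eq_top_iff_eq_one ⊤ q).1 rfl
    simp [epow_top, epow_of_ne_top]
  by_cases hq : q = ⊤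
  · subst hq
    obtain rfl : p = 1 := (ENNReal.HolderConjugate.eq_top_iff_eq_one ⊤ p).1 rfl
    simp [epow_top, epow_of_ne_top]
  have hpq := ENNReal.HolderConjugate.toReal_of_ne_top hp hq
  rw [epow_of_ne_top hq, epow_of_ne_top hp, one_div, one_div,
    ← Real.rpow_add' ha (by simp [hpq.symm.inv_add_inv_eq_one]), hpq.symm.inv_add_inv_eq_one,
    Real.rpow_one]

lemma pnorm_le_mul_pnorm (hp : p ≠ 0) {v w : Fin n → ℝ} (hv : ∀ i, 0 ≤ v i) {c : ℝ}
    (hc : 0 ≤ c) (hvw : ∀ i, v i ≤ c * w i) : pnorm p v ≤ c * pnorm p w := by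
  have habs : ∀ i, |v i| ≤ c * |w i| := fun i => by
    rw [abs_of_nonneg (hv i)]
    exact (hvw i).trans (by gcongr; exact le_abs_self _)
  by_cases hpt : p = ⊤
  · subst hpt
    rw [pnorm_top, pnorm_top, Real.mul_iSup_of_nonneg hc]
    exact ciSup_mono (Set.finite_range _).bddAbove habs
  have hr : 0 < p.toReal := ENNReal.toReal_pos hp hpt
  rw [pnorm_of_ne_top hpt, pnorm_of_ne_top hpt]
  calc (∑ i, |v i| ^ p.toReal) ^ (1 / p.toReal)
      ≤ (∑ i, (c * |w i|) ^ p.toReal) ^ (1 / p.toReal) := by gcongr with i; exact habs i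
    _ = c * (∑ i, |w i| ^ p.toReal) ^ (1 / p.toReal) := by
      simp_rw [Real.mul_rpow hc (abs_nonneg _), ← Finset.mul_sum]
      rw [Real.mul_rpow (by positivity) (by positivity), one_div, Real.rpow_rpow_inv hc hr.ne']

/-- Hölder's inequality against the indicator of `s`. -/
lemma sum_le_epow_card_mul_pnorm [p.HolderConjugate q] (s : Finset (Fin n)) {w : Fin n → ℝ}
    (hw : ∀ i, 0 ≤ w i) : ∑ j ∈ s, w j ≤ epow (#s) q * pnorm p w := by
  by_cases hp : p = ⊤
  · subst hp
    obtain rfl : q = 1 := (ENNReal.HolderConjugate.eq_top_iff_eq_one ⊤ q).1 rfl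
    rw [pnorm_top, epow_of_ne_top ENNReal.one_ne_top]
    simp only [ENNReal.toReal_one, div_one, Real.rpow_one]
    calc ∑ j ∈ s, w j ≤ ∑ _j ∈ s, ⨆ i, |w i| :=
          Finset.sum_le_sum fun j _ => (le_abs_self _).trans
            (le_ciSup (Set.finite_range fun i => |w i|).bddAbove j)
      _ = #s * ⨆ i, |w i| := by rw [Finset.sum_const, nsmul_eq_mul]
  have hnorm_sub : ∀ r : ℝ, ∑ j ∈ s, w j ^ r ≤ ∑ i, |w i| ^ r := fun r =>
    calc ∑ j ∈ s, w j ^ r = ∑ j ∈ s, |w j| ^ r :=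
          Finset.sum_congr rfl fun j _ => by rw [abs_of_nonneg (hw j)]
      _ ≤ ∑ i, |w i| ^ r :=
          Finset.sum_le_sum_of_subset_of_nonneg (Finset.subset_univ s) fun i _ _ => by positivity
  by_cases hq : q = ⊤
  · subst hq
    obtain rfl : p = 1 := (ENNReal.HolderConjugate.eq_top_iff_eq_one ⊤ p).1 rfl
    rw [pnorm_of_ne_top hp, epow_top, one_mul]
    simpa using hnorm_sub 1
  have hpq := ENNReal.HolderConjugate.toReal_of_ne_top hp hq
  rw [pnorm_of_ne_top hp, epow_of_ne_top hq, mul_comm]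
  calc ∑ j ∈ s, w j = ∑ j ∈ s, w j * 1 := by simp
    _ ≤ (∑ j ∈ s, w j ^ p.toReal) ^ (1 / p.toReal) * (∑ j ∈ s, (1:ℝ) ^ q.toReal) ^ (1 / q.toReal) :=
      Real.inner_le_Lp_mul_Lq_of_nonneg s hpq (fun j _ => hw j) (fun _ _ => zero_le_one)
    _ ≤ (∑ i, |w i| ^ p.toReal) ^ (1 / p.toReal) * (#s : ℝ) ^ (1 / q.toReal) := by
      simp only [Real.one_rpow, Finset.sum_const, nsmul_eq_mul, mul_one]
      gcongr
      · exact Finset.sum_nonneg fun j _ => Real.rpow_nonneg (hw j) _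
      · exact hnorm_sub _

end PNorm

section ProductEstimates

lemma norm_prod_one_add_sub_one_le_prod {ι R : Type*} [NormedCommRing R] [NormOneClass R]
    (s : Finset ι) (c : ι → R) : ‖∏ j ∈ s, (1 + c j) - 1‖ ≤ ∏ j ∈ s, (1 + ‖c j‖) - 1 := by
  classical
  induction s using Finset.induction_on with
  | empty => simp
  | insert a s ha ih =>
    rw [prod_insert ha, prod_insert ha,
      show (1 + c a) * ∏ j ∈ s, (1 + c j) - 1 = (∏ j ∈ s, (1 + c j) - 1) + c a * ∏ j ∈ s, (1 + c j)
        by ring]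
    have hprod : ‖∏ j ∈ s, (1 + c j)‖ ≤ ∏ j ∈ s, (1 + ‖c j‖) := by
      have := norm_le_norm_sub_add (∏ j ∈ s, (1 + c j)) 1
      rw [norm_one] at this
      linarith
    calc ‖(∏ j ∈ s, (1 + c j) - 1) + c a * ∏ j ∈ s, (1 + c j)‖
        ≤ (∏ j ∈ s, (1 + ‖c j‖) - 1) + ‖c a‖ * ∏ j ∈ s, (1 + ‖c j‖) :=
          norm_add_le_of_le ih ((norm_mul_le _ _).trans (by gcongr))
      _ = (1 + ‖c a‖) * ∏ j ∈ s, (1 + ‖c j‖) - 1 := by ring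

lemma prod_le_arith_mean_pow {ι : Type*} (s : Finset ι) {z : ι → ℝ} (hz : ∀ j ∈ s, 0 ≤ z j) :
    ∏ j ∈ s, z j ≤ ((∑ j ∈ s, z j) / #s) ^ #s := by
  rcases s.eq_empty_or_nonempty with rfl | hs
  · simp
  have hcard : (#s : ℝ) ≠ 0 := by exact_mod_cast hs.card_pos.ne'
  have hgm := Real.geom_mean_le_arith_mean s (fun _ => 1) z (fun _ _ => zero_le_one)
    (by simpa using hs.card_pos) hz
  simp only [Real.rpow_one, one_mul, sum_const, nsmul_eq_mul, mul_one] at hgm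
  calc ∏ j ∈ s, z j = ((∏ j ∈ s, z j) ^ (#s : ℝ)⁻¹) ^ #s :=
        (Real.rpow_inv_natCast_pow (prod_nonneg hz) hs.card_pos.ne').symm
    _ ≤ ((∑ j ∈ s, z j) / #s) ^ #s := by gcongr; exact Real.rpow_nonneg (prod_nonneg hz) _

lemma one_add_mul_pow_le {t θ : ℝ} (ht : 0 ≤ t) (hθ0 : 0 ≤ θ) (hθ1 : θ ≤ 1) (m : ℕ) :
    (1 + θ * t) ^ m ≤ 1 + θ * ((1 + t) ^ m - 1) := by
  have hconv := (convexOn_pow m).2 (Set.mem_Ici.2 zero_le_one)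
    (Set.mem_Ici.2 (by linarith : (0:ℝ) ≤ 1 + t)) (sub_nonneg.2 hθ1) hθ0 (by ring)
  simp only [smul_eq_mul, one_pow, mul_one] at hconv
  rw [show 1 - θ + θ * (1 + t) = 1 + θ * t by ring] at hconv
  linarith

/-- AM-GM, then convexity of `t ↦ t ^ #s`; the radius of the main theorem is chosen so that
this bound is `h * θ`. -/
lemma prod_one_add_sub_one_le_of_sum_le {ι : Type*} (s : Finset ι) {w : ι → ℝ}
    (hw : ∀ j ∈ s, 0 ≤ w j) {θ τ : ℝ} (hθ0 : 0 ≤ θ) (hθ1 : θ ≤ 1) (hτ : 0 ≤ τ)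
    (hsum : ∑ j ∈ s, w j ≤ #s * (θ * τ)) :
    ∏ j ∈ s, (1 + w j) - 1 ≤ θ * ((1 + τ) ^ #s - 1) := by
  rcases s.eq_empty_or_nonempty with rfl | hs
  · simp
  have hmean : (∑ j ∈ s, (1 + w j)) / #s ≤ 1 + θ * τ := by
    rw [sum_add_distrib, sum_const, nsmul_one, div_le_iff₀ (by exact_mod_cast hs.card_pos)]
    linarith
  have hw' : ∀ j ∈ s, 0 ≤ 1 + w j := fun j hj => by linarith [hw j hj]
  have hmean0 : 0 ≤ (∑ j ∈ s, (1 + w j)) / #s := div_nonneg (sum_nonneg hw') (Nat.cast_nonneg _)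
  have := (prod_le_arith_mean_pow s hw').trans
    ((pow_le_pow_left₀ hmean0 hmean _).trans (one_add_mul_pow_le hτ hθ0 hθ1 #s))
  linarith

end ProductEstimates

section Separation

variable {ι E : Type*}

lemma sInf_norm_sub_le [SeminormedAddCommGroup E] (ξ : ι → E) {i j : ι} (hij : i ≠ j) :
    sInf {r : ℝ | ∃ i j : ι, i ≠ j ∧ r = ‖ξ i - ξ j‖} ≤ ‖ξ i - ξ j‖ :=
  csInf_le ⟨0, by rintro r ⟨a, b, -, rfl⟩; exact norm_nonneg _⟩ ⟨i, j, hij, rfl⟩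

lemma sInf_norm_sub_pos [NormedAddCommGroup E] [Finite ι] [Nontrivial ι] {ξ : ι → E}
    (hξ : Function.Injective ξ) : 0 < sInf {r : ℝ | ∃ i j : ι, i ≠ j ∧ r = ‖ξ i - ξ j‖} := by
  obtain ⟨i₀, j₀, hne⟩ := exists_pair_ne ι
  have hfin : {r : ℝ | ∃ i j : ι, i ≠ j ∧ r = ‖ξ i - ξ j‖}.Finite :=
    (Set.finite_range fun ij : ι × ι => ‖ξ ij.1 - ξ ij.2‖).subset
      (by rintro r ⟨i, j, -, rfl⟩; exact ⟨(i, j), rfl⟩)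
  have hnonempty : {r : ℝ | ∃ i j : ι, i ≠ j ∧ r = ‖ξ i - ξ j‖}.Nonempty := ⟨_, i₀, j₀, hne, rfl⟩
  obtain ⟨i, j, hij, hr⟩ := hnonempty.csInf_mem hfin
  rw [hr, norm_pos_iff, sub_ne_zero]
  exact hξ.ne hij

lemma injective_of_le_norm_sub [NormedAddCommGroup E] {y : ι → E} {δ : ℝ} (hδ : 0 < δ)
    (hy : ∀ i j, i ≠ j → δ ≤ ‖y i - y j‖) : Function.Injective y := by
  intro i j hij
  by_contra hne
  have := hy i j hne
  rw [hij, sub_self, norm_zero] at this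
  linarith

lemma sub_epow_mul_pnorm_le_norm_sub [SeminormedAddCommGroup E] {n : ℕ} {p q : ℝ≥0∞}
    [p.HolderConjugate q] {ξ y : Fin n → E} {sep : ℝ} {i j : Fin n} (hij : i ≠ j)
    (hsep : sep ≤ ‖ξ i - ξ j‖) :
    sep - epow 2 q * pnorm p (fun k => ‖y k - ξ k‖) ≤ ‖y i - y j‖ := by
  have hpair := sum_le_epow_card_mul_pnorm (p := p) (q := q) {i, j}
    (w := fun k => ‖y k - ξ k‖) fun k => norm_nonneg _
  rw [Finset.sum_pair hij, Finset.card_pair hij, Nat.cast_ofNat] at hpair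
  have htri : ‖ξ i - ξ j‖ ≤ ‖y i - y j‖ + ‖y i - ξ i‖ + ‖y j - ξ j‖ :=
    calc ‖ξ i - ξ j‖ = ‖(y i - y j) - (y i - ξ i) + (y j - ξ j)‖ := by congr 1; abel
      _ ≤ ‖y i - y j‖ + ‖y i - ξ i‖ + ‖y j - ξ j‖ :=
        (norm_add_le _ _).trans (add_le_add_left (norm_sub_le _ _) _)
  linarith

end Separation

section Weierstrass

variable {K : Type*} [NormedField K] {n : ℕ} {f : Polynomial K} {ξ y : Fin n → K}

lemma sub_Wcorr_sub_eq (hroot : IsRootVector f ξ) (hlc : f.leadingCoeff ≠ 0)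
    (hy : Function.Injective y) (i : Fin n) :
    y i - Wcorr f y i - ξ i =
      -(y i - ξ i) * (∏ j ∈ univ.erase i, (1 + (y j - ξ j) / (y i - y j)) - 1) := by
  have hne : ∀ j ∈ univ.erase i, y i - y j ≠ 0 := fun j hj =>
    sub_ne_zero.2 (hy.ne (ne_of_mem_erase hj).symm)
  have hfactor : ∏ j ∈ univ.erase i, (1 + (y j - ξ j) / (y i - y j)) =
      (∏ j ∈ univ.erase i, (y i - ξ j)) / ∏ j ∈ univ.erase i, (y i - y j) := by
    rw [← prod_div_distrib]
    refine prod_congr rfl fun j hj => ?_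
    field_simp [hne j hj]
    ring
  rw [hfactor, Wcorr, hroot, ← mul_prod_erase univ (fun j => y i - ξ j) (mem_univ i)]
  field_simp [prod_ne_zero_iff.2 hne]
  ring

lemma norm_sub_Wcorr_sub_le (hroot : IsRootVector f ξ) (hlc : f.leadingCoeff ≠ 0) {δ : ℝ}
    (hδ : 0 < δ) (hy : ∀ i j, i ≠ j → δ ≤ ‖y i - y j‖) (i : Fin n) :
    ‖y i - Wcorr f y i - ξ i‖ ≤ (∏ j ∈ univ.erase i, (1 + ‖y j - ξ j‖ / δ) - 1) * ‖y i - ξ i‖ := by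
  rw [sub_Wcorr_sub_eq hroot hlc (injective_of_le_norm_sub hδ hy) i, norm_mul, norm_neg, mul_comm]
  gcongr
  refine (norm_prod_one_add_sub_one_le_prod _ _).trans (sub_le_sub_right (prod_le_prod
    (fun j _ => by positivity) fun j hj => ?_) 1)
  rw [norm_div]
  gcongr
  exact hy i j (ne_of_mem_erase hj).symm

theorem weierstrass_contraction {p q : ℝ≥0∞} [p.HolderConjugate q] (hroot : IsRootVector f ξ)
    (hlc : f.leadingCoeff ≠ 0) {sep h τ ρ θ : ℝ} (hsep : ∀ i j, i ≠ j → sep ≤ ‖ξ i - ξ j‖)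
    (hτ : 0 ≤ τ) (hτh : (1 + τ) ^ (n - 1) = 1 + h) (hρ0 : 0 ≤ ρ)
    (hρ : epow ((n : ℝ) - 1) q * ρ ≤ ((n : ℝ) - 1) * τ * (sep - epow 2 q * ρ))
    (hδ : 0 < sep - epow 2 q * ρ) (hθ0 : 0 ≤ θ) (hθ1 : θ ≤ 1)
    (hy : pnorm p (fun i => ‖y i - ξ i‖) ≤ ρ * θ) :
    Function.Injective y ∧ ∀ i, ‖y i - Wcorr f y i - ξ i‖ ≤ h * θ * ‖y i - ξ i‖ := by
  set A := epow 2 q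
  have hA : 0 ≤ A := epow_nonneg zero_le_two q
  have hAρθ : A * (ρ * θ) ≤ A * ρ := by gcongr; exact mul_le_of_le_one_right hρ0 hθ1
  have hsepy : ∀ i j, i ≠ j → sep - A * (ρ * θ) ≤ ‖y i - y j‖ := fun i j hij =>
    (sub_le_sub_left (mul_le_mul_of_nonneg_left hy hA) sep).trans
      (sub_epow_mul_pnorm_le_norm_sub hij (hsep i j hij))
  have hpos : 0 < sep - A * (ρ * θ) := by linarith
  refine ⟨injective_of_le_norm_sub hpos hsepy, fun i => ?_⟩
  have hcard : #(univ.erase i) = n - 1 := by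
    rw [card_erase_of_mem (mem_univ i), card_univ, Fintype.card_fin]
  have hcard' : (#(univ.erase i) : ℝ) = (n : ℝ) - 1 := by rw [hcard, Nat.cast_pred i.pos]
  have hsum : ∑ j ∈ univ.erase i, ‖y j - ξ j‖ / (sep - A * (ρ * θ)) ≤
      #(univ.erase i) * (θ * τ) := by
    rw [← sum_div, div_le_iff₀ hpos, hcard']
    have hn1 : 0 ≤ (n : ℝ) - 1 := by rw [← hcard']; positivity
    calc ∑ j ∈ univ.erase i, ‖y j - ξ j‖
        ≤ epow ((n : ℝ) - 1) q * pnorm p (fun j => ‖y j - ξ j‖) := by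
          simpa only [hcard'] using sum_le_epow_card_mul_pnorm (univ.erase i) fun j => norm_nonneg _
      _ ≤ epow ((n : ℝ) - 1) q * ρ * θ := by
          rw [mul_assoc]; gcongr; exact epow_nonneg hn1 q
      _ ≤ ((n : ℝ) - 1) * τ * (sep - A * ρ) * θ := by gcongr
      _ ≤ ((n : ℝ) - 1) * (θ * τ) * (sep - A * (ρ * θ)) := by
          rw [show ((n : ℝ) - 1) * τ * (sep - A * ρ) * θ = ((n : ℝ) - 1) * (θ * τ) * (sep - A * ρ)
            by ring]
          gcongr
  calc ‖y i - Wcorr f y i - ξ i‖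
      ≤ (∏ j ∈ univ.erase i, (1 + ‖y j - ξ j‖ / (sep - A * (ρ * θ))) - 1) * ‖y i - ξ i‖ :=
        norm_sub_Wcorr_sub_le hroot hlc hpos hsepy i
    _ ≤ θ * ((1 + τ) ^ #(univ.erase i) - 1) * ‖y i - ξ i‖ := by
        gcongr
        exact prod_one_add_sub_one_le_of_sum_le _ (fun j _ => by positivity) hθ0 hθ1 hτ hsum
    _ = h * θ * ‖y i - ξ i‖ := by rw [hcard, hτh]; ring

end Weierstrass

/-- Read with `A = 2^{1/q}`, `E = (n-1)^{1/p}`, `B = (n-1)^{1/q}`, `M = n - 1`, `ρ` is the radius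
`R(n,p,h) sep` with `τ = (1+h)^{1/(n-1)} - 1`. -/
lemma radius_bounds {A B E M τ sep ρ : ℝ} (hA : 0 ≤ A) (hE : 0 < E) (hBE : B * E = M)
    (hτ : 0 ≤ τ) (hsep : 0 < sep) (hρ : ρ = τ / (A * τ + 1 / E) * sep) :
    0 ≤ ρ ∧ B * ρ ≤ M * τ * (sep - A * ρ) ∧ 0 < sep - A * ρ := by
  have hD : 0 < A * τ + 1 / E := by positivity
  have hgap : sep - A * ρ = sep / E / (A * τ + 1 / E) := by
    rw [hρ]; field_simp; ring
  subst hρ hBE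
  refine ⟨by positivity, le_of_eq ?_, by rw [hgap]; positivity⟩
  rw [hgap]; field_simp

section Iteration

lemma mul_pow_two_pow_sub_one {M : Type*} [Monoid M] (a : M) (k : ℕ) :
    a * a ^ (2 ^ k - 1) = a ^ 2 ^ k := by
  rw [← pow_succ', Nat.sub_add_cancel Nat.one_le_two_pow]

lemma pow_two_pow_succ_sub_one {M : Type*} [Monoid M] (a : M) (k : ℕ) :
    a ^ (2 ^ (k + 1) - 1) = a ^ 2 ^ k * a ^ (2 ^ k - 1) := by
  rw [← pow_add, pow_succ, mul_two, Nat.add_sub_assoc Nat.one_le_two_pow]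

lemma error_bounds_of_contraction {n : ℕ} {p : ℝ≥0∞} (hp : p ≠ 0) {h ρ : ℝ} (hh0 : 0 ≤ h)
    (hh1 : h ≤ 1) {e : ℕ → Fin n → ℝ} (he : ∀ k i, 0 ≤ e k i) (h0 : pnorm p (e 0) ≤ ρ)
    (hstep : ∀ k θ, 0 ≤ θ → θ ≤ 1 → pnorm p (e k) ≤ ρ * θ → ∀ i, e (k + 1) i ≤ h * θ * e k i) :
    (∀ k, pnorm p (e k) ≤ ρ * h ^ (2 ^ k - 1)) ∧ ∀ k i, e (k + 1) i ≤ h ^ 2 ^ k * e k i := by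
  have hratio : ∀ k, pnorm p (e k) ≤ ρ * h ^ (2 ^ k - 1) → ∀ i, e (k + 1) i ≤ h ^ 2 ^ k * e k i :=
    fun k hk => by
      simpa only [mul_pow_two_pow_sub_one] using
        hstep k _ (pow_nonneg hh0 _) (pow_le_one₀ hh0 hh1) hk
  have hnorm : ∀ k, pnorm p (e k) ≤ ρ * h ^ (2 ^ k - 1) := by
    intro k
    induction k with
    | zero => simpa using h0
    | succ k ih =>
      calc pnorm p (e (k + 1)) ≤ h ^ 2 ^ k * pnorm p (e k) :=
            pnorm_le_mul_pnorm hp (he _) (by positivity) (hratio k ih)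
        _ ≤ h ^ 2 ^ k * (ρ * h ^ (2 ^ k - 1)) := by gcongr
        _ = ρ * h ^ (2 ^ (k + 1) - 1) := by rw [pow_two_pow_succ_sub_one]; ring
  exact ⟨hnorm, fun k => hratio k (hnorm k)⟩

lemma le_pow_two_pow_sub_one_mul {h : ℝ} (hh : 0 ≤ h) {a : ℕ → ℝ}
    (ha : ∀ k, a (k + 1) ≤ h ^ 2 ^ k * a k) (k : ℕ) : a k ≤ h ^ (2 ^ k - 1) * a 0 := by
  induction k with
  | zero => simp
  | succ k ih =>
    calc a (k + 1) ≤ h ^ 2 ^ k * a k := ha k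
      _ ≤ h ^ 2 ^ k * (h ^ (2 ^ k - 1) * a 0) := by gcongr
      _ = h ^ (2 ^ (k + 1) - 1) * a 0 := by rw [pow_two_pow_succ_sub_one]; ring

lemma tendsto_of_norm_sub_le_pow_two_pow {E : Type*} [SeminormedAddCommGroup E] {x : ℕ → E}
    {ξ : E} {h c : ℝ} (hh0 : 0 ≤ h) (hh1 : h < 1) (hx : ∀ k, ‖x k - ξ‖ ≤ h ^ (2 ^ k - 1) * c) :
    Tendsto x atTop (𝓝 ξ) := by
  have hexp : Tendsto (fun k : ℕ => 2 ^ k - 1) atTop atTop :=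
    (tendsto_sub_atTop_nat 1).comp (tendsto_pow_atTop_atTop_of_one_lt (α := ℕ) one_lt_two)
  rw [tendsto_iff_norm_sub_tendsto_zero]
  refine squeeze_zero (fun _ => norm_nonneg _) hx ?_
  simpa using ((tendsto_pow_atTop_nhds_zero_of_lt_one hh0 hh1).comp hexp).mul_const c

end Iteration

theorem weierstrass_local_convergence_dochev_general
    {K : Type*} [NormedField K] {n : ℕ} (hn : 2 ≤ n)
    (f : Polynomial K) (hdeg : f.natDegree = n)
    (ξ : Fin n → K) (hroot : IsRootVector f ξ) (hξ : Function.Injective ξ)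
    (p q : ℝ≥0∞) (hpq : 1 / p + 1 / q = 1)
    (h : ℝ) (hh : 0 < h) (hh1 : h < 1)
    (sep : ℝ) (hsep : sep = sInf {r : ℝ | ∃ i j : Fin n, i ≠ j ∧ r = ‖ξ i - ξ j‖})
    (ρ : ℝ)
    (hρ : ρ = ((1 + h) ^ ((1:ℝ) / ((n:ℝ) - 1)) - 1) /
      (epow 2 q * ((1 + h) ^ ((1:ℝ) / ((n:ℝ) - 1)) - 1) + 1 / epow ((n : ℝ) - 1) p) * sep)
    (x : ℕ → Fin n → K)
    (hinit : pnorm p (fun i => ‖x 0 i - ξ i‖) ≤ ρ)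
    (hiter : ∀ k : ℕ, x (k+1) = fun i => x k i - Wcorr f (x k) i) :
    (∀ k : ℕ, Function.Injective (x k)) ∧
    (∀ i : Fin n, Filter.Tendsto (fun k => x k i) Filter.atTop (nhds (ξ i))) ∧
    (∀ k : ℕ, ∀ i : Fin n, ‖x (k+1) i - ξ i‖ ≤ h ^ 2 ^ k * ‖x k i - ξ i‖) ∧
    (∀ k : ℕ, ∀ i : Fin n, ‖x k i - ξ i‖ ≤ h ^ (2 ^ k - 1) * ‖x 0 i - ξ i‖) ∧
    (∀ k : ℕ, pnorm p (fun i => ‖x k i - ξ i‖) ≤ ρ * h ^ (2 ^ k - 1)) := by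
  have : p.HolderConjugate q := ENNReal.holderConjugate_iff.2 (by simpa only [one_div] using hpq)
  have : Nontrivial (Fin n) := Fin.nontrivial_iff_two_le.2 hn
  have hlc : f.leadingCoeff ≠ 0 := fun h0 => by
    rw [Polynomial.leadingCoeff_eq_zero.1 h0, Polynomial.natDegree_zero] at hdeg; omega
  have hn1 : (n : ℝ) - 1 = (n - 1 : ℕ) := by rw [Nat.cast_pred (by omega)]
  have hn1_pos : 0 < (n : ℝ) - 1 := by rw [hn1]; exact_mod_cast (by omega : 0 < n - 1)
  set τ := (1 + h) ^ ((1:ℝ) / ((n:ℝ) - 1)) - 1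
  have hτ : 0 ≤ τ := sub_nonneg.2 (Real.one_le_rpow (by linarith) (one_div_nonneg.2 hn1_pos.le))
  have hτh : (1 + τ) ^ (n - 1) = 1 + h := by
    rw [add_sub_cancel, hn1, one_div, Real.rpow_inv_natCast_pow (by linarith) (by omega)]
  obtain ⟨hρ0, hρτ, hδ⟩ := radius_bounds (epow_nonneg zero_le_two q) (epow_pos hn1_pos p)
    (epow_mul_epow (p := p) (q := q) hn1_pos.le) hτ (by rw [hsep]; exact sInf_norm_sub_pos hξ) hρ
  have hsep_le : ∀ i j, i ≠ j → sep ≤ ‖ξ i - ξ j‖ := fun i j hij => hsep ▸ sInf_norm_sub_le ξ hij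
  have hstep : ∀ (y : Fin n → K) θ, 0 ≤ θ → θ ≤ 1 → pnorm p (fun i => ‖y i - ξ i‖) ≤ ρ * θ →
      Function.Injective y ∧ ∀ i, ‖y i - Wcorr f y i - ξ i‖ ≤ h * θ * ‖y i - ξ i‖ :=
    fun y θ hθ0 hθ1 => weierstrass_contraction hroot hlc hsep_le hτ hτh hρ0 hρτ hδ hθ0 hθ1
  obtain ⟨hnorm, hratio⟩ := error_bounds_of_contraction (ENNReal.HolderConjugate.ne_zero p q)
    (e := fun k i => ‖x k i - ξ i‖) hh.le hh1.le (fun _ _ => norm_nonneg _) hinit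
    fun k θ hθ0 hθ1 hk i => by
      simpa only [hiter k] using (hstep (x k) θ hθ0 hθ1 hk).2 i
  have hcomp : ∀ k i, ‖x k i - ξ i‖ ≤ h ^ (2 ^ k - 1) * ‖x 0 i - ξ i‖ := fun k i =>
    le_pow_two_pow_sub_one_mul (a := fun k => ‖x k i - ξ i‖) hh.le (hratio · i) k
  exact ⟨fun k => (hstep (x k) _ (pow_nonneg hh.le _) (pow_le_one₀ hh.le hh1.le) (hnorm k)).1,
    fun i => tendsto_of_norm_sub_le_pow_two_pow hh.le hh1 (hcomp · i), hratio, hcomp, hnorm⟩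

/-- Dochev-type corollary. If `‖x⁰ − ξ‖_p ≤ ρ = R(n,p,h)·sep(f)` with
`0 < h < 1`, then the Weierstrass iteration is well defined, converges to `ξ`, with
error estimates `|x^{k+1}_i − ξ_i| ≤ h^{2^k}|x^k_i − ξ_i|`,
`|x^k_i − ξ_i| ≤ h^{2^k−1}|x⁰_i − ξ_i|` and `‖x^k − ξ‖_p ≤ ρ h^{2^k−1}`. -/
theorem weierstrass_local_convergence_dochev
    {K : Type*} [NormedField K] {n : ℕ} (hn : 2 ≤ n)
    (f : Polynomial K) (hdeg : f.natDegree = n)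
    (ξ : Fin n → K) (hroot : IsRootVector f ξ) (hξ : Function.Injective ξ)
    (p q : ℝ≥0∞) (hp : 1 ≤ p) (hpq : 1 / p + 1 / q = 1)
    (h : ℝ) (hh : 0 < h) (hh1 : h < 1)
    (sep : ℝ) (hsep : sep = sInf {r : ℝ | ∃ i j : Fin n, i ≠ j ∧ r = ‖ξ i - ξ j‖})
    (ρ : ℝ)
    (hρ : ρ = ((1 + h) ^ ((1:ℝ) / ((n:ℝ) - 1)) - 1) /
      (epow 2 q * ((1 + h) ^ ((1:ℝ) / ((n:ℝ) - 1)) - 1) + 1 / epow ((n : ℝ) - 1) p) * sep)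
    (x : ℕ → Fin n → K)
    (hinit : pnorm p (fun i => ‖x 0 i - ξ i‖) ≤ ρ)
    (hiter : ∀ k : ℕ, x (k+1) = fun i => x k i - Wcorr f (x k) i) :
    (∀ k : ℕ, Function.Injective (x k)) ∧
    (∀ i : Fin n, Filter.Tendsto (fun k => x k i) Filter.atTop (nhds (ξ i))) ∧
    (∀ k : ℕ, ∀ i : Fin n, ‖x (k+1) i - ξ i‖ ≤ h ^ 2 ^ k * ‖x k i - ξ i‖) ∧
    (∀ k : ℕ, ∀ i : Fin n, ‖x k i - ξ i‖ ≤ h ^ (2 ^ k - 1) * ‖x 0 i - ξ i‖) ∧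
    (∀ k : ℕ, pnorm p (fun i => ‖x k i - ξ i‖) ≤ ρ * h ^ (2 ^ k - 1)) :=
  weierstrass_local_convergence_dochev_general hn f hdeg ξ hroot hξ p q hpq h hh hh1 sep hsep ρ hρ x
    hinit hiter
end
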